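/- Fix an integer n ≥ 1, a locally compact Hausdorff space X, principal 𝕋-bundles pᵢ : Bᵢ → X for 1 ≤ i ≤ n, and homeomorphisms fᵢ : X → X for 2 ≤ i ≤ n; let C := {(c₁, …, cₙ) ∈ ∏ᵢ Bᵢ : pᵢ(cᵢ) = f_{i+1}(p_{i+1}(c_{i+1})) for 1 ≤ i ≤ n − 1} and let B := C / K_n with the quotient topology, writing [c₁,…,cₙ] for the class of (c₁,…,cₙ). Then: (1) the formula p([c₁,…,cₙ]) := pₙ(cₙ) gives a well-defined continuous surjection p : B → X; (2) the formula z·[c₁,…,cₙ] := [c₁,…,z·cₙ] gives a well-defined continuous 𝕋-action on B satisfying p(z·[c]) = p([c]); (3) the map φ : 𝕋 × B → B ×_p B := {([c],[c']) : p([c]) = p([c'])}, φ(z, [c]) := (z·[c], [c]), is a homeomorphism, with inverse given by ([c₁,…,cₙ], [c′₁,…,c′ₙ]) ↦ (∏ᵢ ⟨cᵢ, c′ᵢ⟩, [c′₁,…,c′ₙ]) whenever p([c]) = p([c']) and representatives are chosen with pᵢ(cᵢ) = pᵢ(c′ᵢ) for all i. -/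
import Mathlib


open Topology

/-- A (locally trivial) principal `𝕋`-bundle: a continuous surjection `proj : B → X`
together with a continuous left action of the circle group `𝕋` on `B` that is
fibre-preserving, principal, and locally trivial. -/
structure PrincipalCircleBundle (B X : Type*) [TopologicalSpace B] [TopologicalSpace X] where
  proj : B → X
  smul : Circle → B → B
  continuous_proj : Continuous proj
  surjective_proj : Function.Surjective proj
  continuous_smul : Continuous fun p : Circle × B => smul p.1 p.2
  one_smul : ∀ b : B, smul 1 b = b
  mul_smul : ∀ (z w : Circle) (b : B), smul (z * w) b = smul z (smul w b)
  proj_smul : ∀ (z : Circle) (b : B), proj (smul z b) = proj b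
  principal : IsHomeomorph fun p : Circle × B =>
    (⟨(smul p.1 p.2, p.2), proj_smul p.1 p.2⟩ : {q : B × B // proj q.1 = proj q.2})
  locTriv : ∀ x : X, ∃ U : Set X, IsOpen U ∧ x ∈ U ∧
    ∃ S : X → B, ContinuousOn S U ∧ ∀ u ∈ U, proj (S u) = u


/-- `⟨b₁, b₂⟩` : the unique circle element with `⟨b₁, b₂⟩ • b₂ = b₁`
(for `b₁, b₂` in the same fibre). -/
noncomputable def PrincipalCircleBundle.pairing {B X : Type*} [TopologicalSpace B]
    [TopologicalSpace X] (P : PrincipalCircleBundle B X) (b₁ b₂ : B) : Circle :=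
  haveI := Classical.propDecidable (∃ z : Circle, P.smul z b₂ = b₁)
  if h : ∃ z : Circle, P.smul z b₂ = b₁ then h.choose else 1


/-- The balanced fibred-product space `C` (here `n = m + 1`, with `f i` playing the rôle
of `f_{i+2}`). -/
def Cset (m : ℕ) {X : Type*} [TopologicalSpace X] (B : Fin (m + 1) → Type*)
    [∀ i, TopologicalSpace (B i)] (P : ∀ i, PrincipalCircleBundle (B i) X)
    (f : Fin m → X ≃ₜ X) : Set (∀ i, B i) :=
  {c | ∀ i : Fin m, (P i.castSucc).proj (c i.castSucc) = f i ((P i.succ).proj (c i.succ))}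

/-- Two elements of `C` are related iff they differ by the coordinatewise action of an
element of `K_n = {z ∈ 𝕋ⁿ : z₁⋯zₙ = 1}`; the orbit space `B = C/K_n` is `Quot` of this
relation, with the quotient topology. -/
def Krel (m : ℕ) {X : Type*} [TopologicalSpace X] (B : Fin (m + 1) → Type*)
    [∀ i, TopologicalSpace (B i)] (P : ∀ i, PrincipalCircleBundle (B i) X)
    (f : Fin m → X ≃ₜ X) : ↥(Cset m B P f) → ↥(Cset m B P f) → Prop :=
  fun c c' => ∃ z : Fin (m + 1) → Circle, (∏ i, z i) = 1 ∧
    ∀ i, (P i).smul (z i) (c.1 i) = c'.1 i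

namespace PrincipalCircleBundle
variable {Bd X : Type*} [TopologicalSpace Bd] [TopologicalSpace X]
  (P : PrincipalCircleBundle Bd X)
theorem smul_cancel {z w : Circle} {b : Bd} (h : P.smul z b = P.smul w b) : z = w := by
  have := P.principal.injective (a₁ := (z, b)) (a₂ := (w, b)) (Subtype.ext (by simp [h]))
  exact (Prod.ext_iff.mp this).1
theorem exists_smul {b₁ b₂ : Bd} (h : P.proj b₁ = P.proj b₂) :
    ∃ z : Circle, P.smul z b₂ = b₁ := by
  obtain ⟨⟨z, b⟩, hb⟩ := P.principal.surjective ⟨(b₁, b₂), h⟩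
  have hb' := Subtype.ext_iff.mp hb
  have h1 : P.smul z b = b₁ := congrArg Prod.fst hb'
  have h2 : b = b₂ := congrArg Prod.snd hb'
  exact ⟨z, h2 ▸ h1⟩
theorem pairing_smul {b₁ b₂ : Bd} (h : P.proj b₁ = P.proj b₂) :
    P.smul (P.pairing b₁ b₂) b₂ = b₁ := by
  have hex := P.exists_smul h
  simp only [pairing]; rw [dif_pos hex]; exact hex.choose_spec
theorem inv_smul_smul (z : Circle) (b : Bd) : P.smul z⁻¹ (P.smul z b) = b := by
  rw [← P.mul_smul, inv_mul_cancel, P.one_smul]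
theorem continuous_pairing :
    Continuous fun q : {q : Bd × Bd // P.proj q.1 = P.proj q.2} =>
      P.pairing q.1.1 q.1.2 := by
  have he := P.principal
  set e := he.homeomorph _ with hedef
  have key : ∀ q : {q : Bd × Bd // P.proj q.1 = P.proj q.2},
      P.pairing q.1.1 q.1.2 = (e.symm q).1 := by
    intro q
    have h1' := congrArg Subtype.val (e.apply_symm_apply q)
    simp only [hedef, IsHomeomorph.homeomorph_apply] at h1'
    have h2 : P.smul (e.symm q).1 (e.symm q).2 = q.1.1 := congrArg Prod.fst h1'
    have h3 : (e.symm q).2 = q.1.2 := congrArg Prod.snd h1'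
    apply P.smul_cancel (b := q.1.2)
    rw [P.pairing_smul q.2, ← h3, h2]
  rw [funext key]
  exact continuous_fst.comp (Homeomorph.continuous e.symm)
end PrincipalCircleBundle

section Main
variable {m : ℕ} {X : Type*} [TopologicalSpace X]
  {B : Fin (m + 1) → Type*} [∀ i, TopologicalSpace (B i)]
  {P : ∀ i, PrincipalCircleBundle (B i) X} {f : Fin m → X ≃ₜ X}

theorem mem_smul (z : Fin (m + 1) → Circle) (c : ↥(Cset m B P f)) :
    (fun i => (P i).smul (z i) (c.1 i)) ∈ Cset m B P f := by
  intro i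
  simp only [(P i.castSucc).proj_smul, (P i.succ).proj_smul]
  exact c.2 i

theorem krel_equiv : Equivalence (Krel m B P f) := by
  constructor
  · intro c
    exact ⟨fun _ => 1, by simp, fun i => (P i).one_smul _⟩
  · rintro c d ⟨z, hz, hs⟩
    refine ⟨fun i => (z i)⁻¹, by simp [Finset.prod_inv_distrib, hz], fun i => ?_⟩
    rw [← hs i, (P i).inv_smul_smul]
  · rintro c d e ⟨z, hz, hs⟩ ⟨w, hw, hs'⟩
    refine ⟨fun i => w i * z i, by rw [Finset.prod_mul_distrib, hz, hw, mul_one], fun i => ?_⟩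
    rw [(P i).mul_smul, hs i, hs' i]

theorem krel_of_mk_eq {c d : ↥(Cset m B P f)}
    (h : Quot.mk (Krel m B P f) c = Quot.mk (Krel m B P f) d) : Krel m B P f c d :=
  krel_equiv.eqvGen_iff.mp (Quot.eq.mp h)

/-- coordinatewise action on `C`. -/
def AcC (z : Fin (m + 1) → Circle) (c : ↥(Cset m B P f)) : ↥(Cset m B P f) :=
  ⟨fun i => (P i).smul (z i) (c.1 i), mem_smul z c⟩

theorem continuous_AcC (z : Fin (m + 1) → Circle) :
    Continuous fun c : ↥(Cset m B P f) => AcC z c := by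
  refine Continuous.subtype_mk (continuous_pi fun i => ?_) _
  exact (P i).continuous_smul.comp
    (continuous_const.prodMk ((continuous_apply i).comp continuous_subtype_val))

theorem isOpenMap_mk : IsOpenMap (Quot.mk (Krel m B P f)) := by
  intro U hU
  rw [← isQuotientMap_quot_mk.isOpen_preimage]
  have : Quot.mk (Krel m B P f) ⁻¹' (Quot.mk (Krel m B P f) '' U) =
      ⋃ z : {z : Fin (m + 1) → Circle // (∏ i, z i) = 1}, AcC z.1 ⁻¹' U := by
    ext d
    simp only [Set.mem_preimage, Set.mem_image, Set.mem_iUnion]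
    constructor
    · rintro ⟨c, hcU, hcd⟩
      obtain ⟨z, hz, hs⟩ := krel_of_mk_eq hcd
      refine ⟨⟨fun i => (z i)⁻¹, by simp [Finset.prod_inv_distrib, hz]⟩, ?_⟩
      have : AcC (fun i => (z i)⁻¹) d = c := by
        apply Subtype.ext; funext i
        simp only [AcC, ← hs i, (P i).inv_smul_smul]
      rwa [this]
    · rintro ⟨z, hzU⟩
      refine ⟨AcC z.1 d, hzU, Quot.sound ⟨fun i => (z.1 i)⁻¹,
        by simp [Finset.prod_inv_distrib, z.2], fun i => (P i).inv_smul_smul _ _⟩⟩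
  rw [this]
  exact isOpen_iUnion fun z => (continuous_AcC z.1).isOpen_preimage U hU


/-- projection -/
def pmap : Quot (Krel m B P f) → X :=
  Quot.lift (fun c => (P (Fin.last m)).proj (c.1 (Fin.last m))) (by
    rintro c d ⟨z, hz, hs⟩
    simp only [← hs (Fin.last m), (P (Fin.last m)).proj_smul])

@[simp] theorem pmap_mk (c : ↥(Cset m B P f)) :
    pmap (Quot.mk (Krel m B P f) c) = (P (Fin.last m)).proj (c.1 (Fin.last m)) := rfl

/-- the last-coordinate circle action on `C`. -/
def actC (z : Circle) (c : ↥(Cset m B P f)) : ↥(Cset m B P f) :=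
  ⟨fun i => if i = Fin.last m then (P i).smul z (c.1 i) else c.1 i, by
    intro i
    have hne : i.castSucc ≠ Fin.last m := (Fin.castSucc_lt_last i).ne
    simp only [hne, if_false]
    by_cases hi : i.succ = Fin.last m
    · simp only [hi, if_true]
      rw [(P i.succ).proj_smul]
      exact c.2 i
    · simp only [hi, if_false]
      exact c.2 i⟩

theorem continuous_actC :
    Continuous fun q : Circle × ↥(Cset m B P f) => actC q.1 q.2 := by
  refine Continuous.subtype_mk (continuous_pi fun i => ?_) _
  by_cases hi : i = Fin.last m
  · subst hi
    simp only [eq_self_iff_true, if_true]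
    exact (P (Fin.last m)).continuous_smul.comp
      (continuous_fst.prodMk ((continuous_apply (Fin.last m)).comp
        (continuous_subtype_val.comp continuous_snd)))
  · simp only [hi, if_false]
    exact (continuous_apply i).comp (continuous_subtype_val.comp continuous_snd)

theorem krel_actC {z : Circle} {c d : ↥(Cset m B P f)} (h : Krel m B P f c d) :
    Krel m B P f (actC z c) (actC z d) := by
  obtain ⟨u, hu, hs⟩ := h
  refine ⟨u, hu, fun i => ?_⟩
  show (P i).smul (u i) (if i = Fin.last m then (P i).smul z (c.1 i) else c.1 i)
      = (if i = Fin.last m then (P i).smul z (d.1 i) else d.1 i)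
  by_cases hi : i = Fin.last m
  · subst hi
    simp only [eq_self_iff_true, if_true]
    rw [← (P (Fin.last m)).mul_smul, mul_comm, (P (Fin.last m)).mul_smul, hs (Fin.last m)]
  · simp only [hi, if_false]
    exact hs i

/-- the circle action on the quotient. -/
def actQ (z : Circle) : Quot (Krel m B P f) → Quot (Krel m B P f) :=
  Quot.lift (fun c => Quot.mk (Krel m B P f) (actC z c))
    (fun _ _ h => Quot.sound (krel_actC h))

@[simp] theorem actQ_mk (z : Circle) (c : ↥(Cset m B P f)) :
    actQ z (Quot.mk (Krel m B P f) c) = Quot.mk (Krel m B P f) (actC z c) := rfl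

theorem continuous_actQ :
    Continuous fun q : Circle × Quot (Krel m B P f) => actQ q.1 q.2 := by
  have hq : IsQuotientMap (Prod.map (id : Circle → Circle) (Quot.mk (Krel m B P f))) :=
    (IsOpenMap.id.prodMap isOpenMap_mk).isQuotientMap
      (continuous_id.prodMap continuous_quot_mk)
      (Function.surjective_id.prodMap Quot.exists_rep)
  rw [hq.continuous_iff]
  have : (fun q : Circle × Quot (Krel m B P f) => actQ q.1 q.2) ∘
      Prod.map id (Quot.mk (Krel m B P f)) =
      fun q : Circle × ↥(Cset m B P f) => Quot.mk (Krel m B P f) (actC q.1 q.2) := rfl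
  rw [this]
  exact continuous_quot_mk.comp continuous_actC

theorem pmap_actQ (z : Circle) (x : Quot (Krel m B P f)) : pmap (actQ z x) = pmap x := by
  induction x using Quot.ind with
  | mk c =>
    simp only [actQ_mk, pmap_mk]
    show (P (Fin.last m)).proj
        (if Fin.last m = Fin.last m then (P (Fin.last m)).smul z (c.1 (Fin.last m))
          else c.1 (Fin.last m)) = _
    rw [if_pos rfl, (P (Fin.last m)).proj_smul]

theorem fibres_match (c c' : ↥(Cset m B P f))
    (h : (P (Fin.last m)).proj (c.1 (Fin.last m)) = (P (Fin.last m)).proj (c'.1 (Fin.last m))) :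
    ∀ i, (P i).proj (c.1 i) = (P i).proj (c'.1 i) := by
  intro i
  induction i using Fin.reverseInduction with
  | last => exact h
  | cast i ih => rw [c.2 i, c'.2 i, ih]

theorem actQ_cancel {z w : Circle} {x : Quot (Krel m B P f)}
    (h : actQ z x = actQ w x) : z = w := by
  obtain ⟨c, rfl⟩ := Quot.exists_rep x
  obtain ⟨u, hu, hs⟩ := krel_of_mk_eq (by simpa using h)
  have hune : ∀ i, i ≠ Fin.last m → u i = 1 := by
    intro i hi
    have := hs i
    simp only [actC, hi, if_false] at this
    exact (P i).smul_cancel (by rw [this, (P i).one_smul])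
  have hul : u (Fin.last m) = 1 := by
    rw [← hu, Fintype.prod_eq_single (Fin.last m) hune]
  have := hs (Fin.last m)
  simp only [actC, if_pos rfl, hul, (P (Fin.last m)).one_smul] at this
  exact (P (Fin.last m)).smul_cancel this

theorem actQ_pairing (c c' : ↥(Cset m B P f))
    (h : ∀ i, (P i).proj (c.1 i) = (P i).proj (c'.1 i)) :
    actQ (∏ i, (P i).pairing (c.1 i) (c'.1 i)) (Quot.mk (Krel m B P f) c')
      = Quot.mk (Krel m B P f) c := by
  set z : Fin (m + 1) → Circle := fun i => (P i).pairing (c.1 i) (c'.1 i) with hzdef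
  set Z : Circle := ∏ i, z i with hZdef
  have hz : ∀ i, (P i).smul (z i) (c'.1 i) = c.1 i := fun i => (P i).pairing_smul (h i)
  rw [actQ_mk]
  apply Quot.sound
  refine ⟨fun i => z i * (if i = Fin.last m then Z⁻¹ else 1), ?_, fun i => ?_⟩
  · rw [Finset.prod_mul_distrib, ← hZdef]
    have : (∏ i, (if i = Fin.last m then (Z⁻¹ : Circle) else 1)) = Z⁻¹ := by
      rw [Fintype.prod_eq_single (Fin.last m) (fun i hi => if_neg hi), if_pos rfl]
    rw [this, mul_inv_cancel]
  · show (P i).smul _ (if i = Fin.last m then (P i).smul Z (c'.1 i) else c'.1 i) = c.1 i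
    by_cases hi : i = Fin.last m
    · subst hi
      simp only [eq_self_iff_true, if_true]
      rw [← (P (Fin.last m)).mul_smul, mul_assoc, inv_mul_cancel, mul_one]
      exact hz (Fin.last m)
    · simp only [hi, if_false, mul_one]
      exact hz i

theorem pmap_surj : Function.Surjective (pmap (m := m) (B := B) (P := P) (f := f)) := by
  intro x
  set g : Fin (m + 1) → X := Fin.reverseInduction x (fun i xi => f i xi) with hg
  have hc : ∀ i, ∃ b : B i, (P i).proj b = g i := fun i => (P i).surjective_proj (g i)
  choose b hb using hc
  have hmem : b ∈ Cset m B P f := by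
    intro i
    rw [hb, hb]
    simp [hg, Fin.reverseInduction_castSucc]
  exact ⟨Quot.mk _ ⟨b, hmem⟩, by simp [hb, hg]⟩


theorem range_phi :
    Set.range (fun q : Circle × Quot (Krel m B P f) => (actQ q.1 q.2, q.2)) =
      {q : Quot (Krel m B P f) × Quot (Krel m B P f) | pmap q.1 = pmap q.2} := by
  ext s
  constructor
  · rintro ⟨⟨z, x⟩, rfl⟩
    exact pmap_actQ z x
  · intro hs
    obtain ⟨c, hc⟩ := Quot.exists_rep s.1
    obtain ⟨c', hc'⟩ := Quot.exists_rep s.2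
    have hf := fibres_match c c' (by rw [← pmap_mk, ← pmap_mk, hc, hc']; exact hs)
    refine ⟨(∏ i, (P i).pairing (c.1 i) (c'.1 i), s.2), ?_⟩
    simp only
    rw [← hc', actQ_pairing c c' hf, hc, hc']

theorem isEmbedding_phi :
    Topology.IsEmbedding
      (fun q : Circle × Quot (Krel m B P f) => (actQ q.1 q.2, q.2)) := by
  classical
  set S : Set (Quot (Krel m B P f) × Quot (Krel m B P f)) :=
    {q | pmap q.1 = pmap q.2} with hS
  have hmem : ∀ q : Circle × Quot (Krel m B P f), (actQ q.1 q.2, q.2) ∈ S :=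
    fun q => pmap_actQ q.1 q.2
  set Φ' : Circle × Quot (Krel m B P f) → ↥S := fun q => ⟨(actQ q.1 q.2, q.2), hmem q⟩
    with hΦ'
  have hΦ'c : Continuous Φ' :=
    (continuous_actQ.prodMk continuous_snd).subtype_mk _
  have hex : ∀ s : ↥S, ∃ z : Circle, actQ z s.1.2 = s.1.1 := by
    intro s
    obtain ⟨c, hc⟩ := Quot.exists_rep s.1.1
    obtain ⟨c', hc'⟩ := Quot.exists_rep s.1.2
    have hf := fibres_match c c' (by rw [← pmap_mk, ← pmap_mk, hc, hc']; exact s.2)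
    exact ⟨∏ i, (P i).pairing (c.1 i) (c'.1 i), by rw [← hc', actQ_pairing c c' hf, hc]⟩
  set g : ↥S → Circle := fun s => (hex s).choose with hgdef
  have hgspec : ∀ s : ↥S, actQ (g s) s.1.2 = s.1.1 := fun s => (hex s).choose_spec
  set mk2 : ↥(Cset m B P f) × ↥(Cset m B P f) →
      Quot (Krel m B P f) × Quot (Krel m B P f) :=
    Prod.map (Quot.mk _) (Quot.mk _) with hmk2
  have hr : IsQuotientMap (S.restrictPreimage mk2) :=
    ((isOpenMap_mk.prodMap isOpenMap_mk).restrictPreimage S).isQuotientMap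
      ((continuous_quot_mk.prodMap continuous_quot_mk).restrictPreimage)
      (Set.restrictPreimage_surjective S
        (Function.Surjective.prodMap Quot.exists_rep Quot.exists_rep))
  have hgcont : Continuous g := by
    rw [hr.continuous_iff]
    have heq : g ∘ (S.restrictPreimage mk2)
        = fun t : ↥(mk2 ⁻¹' S) => ∏ i, (P i).pairing (t.1.1.1 i) (t.1.2.1 i) := by
      funext t
      have ht : pmap (Quot.mk (Krel m B P f) t.1.1) = pmap (Quot.mk (Krel m B P f) t.1.2) :=
        t.2
      have hf := fibres_match t.1.1 t.1.2 ht
      apply actQ_cancel (x := Quot.mk (Krel m B P f) t.1.2)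
      rw [actQ_pairing t.1.1 t.1.2 hf]
      exact hgspec (S.restrictPreimage mk2 t)
    rw [heq]
    refine continuous_finset_prod _ (fun i _ => ?_)
    exact ((P i).continuous_pairing).comp
      ((Continuous.prodMk
        ((continuous_apply i).comp
          (continuous_subtype_val.comp (continuous_fst.comp continuous_subtype_val)))
        ((continuous_apply i).comp
          (continuous_subtype_val.comp (continuous_snd.comp continuous_subtype_val)))).subtype_mk
        (fun t => fibres_match t.1.1 t.1.2 t.2 i))
  have hΨc : Continuous (fun s : ↥S => ((g s, s.1.2) : Circle × Quot (Krel m B P f))) :=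
    hgcont.prodMk (continuous_snd.comp continuous_subtype_val)
  have hli : Function.LeftInverse
      (fun s : ↥S => ((g s, s.1.2) : Circle × Quot (Krel m B P f))) Φ' := by
    intro q
    have h1 : actQ (g (Φ' q)) q.2 = actQ q.1 q.2 := hgspec (Φ' q)
    exact Prod.ext_iff.mpr ⟨actQ_cancel h1, rfl⟩
  have hembΦ' : Topology.IsEmbedding Φ' := hli.isEmbedding hΨc hΦ'c
  have hcomp : (fun q : Circle × Quot (Krel m B P f) => (actQ q.1 q.2, q.2))
      = Subtype.val ∘ Φ' := rfl
  rw [hcomp]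
  exact Topology.IsEmbedding.subtypeVal.comp hembΦ'

end Main


/-- On `B = C/K_n`: (1) `p([c]) := pₙ(cₙ)` is a well-defined continuous surjection;
(2) `z·[c₁,…,cₙ] := [c₁,…,z·cₙ]` is a well-defined continuous `𝕋`-action satisfying
`p(z·[c]) = p([c])`; (3) `(z, [c]) ↦ (z·[c], [c])` is a homeomorphism of `𝕋 × B` onto
`B ×_p B`, with inverse `([c],[c']) ↦ (∏ᵢ ⟨cᵢ, c′ᵢ⟩, [c'])` for fibrewise-matching
representatives. -/
theorem stmt10 (m : ℕ) {X : Type*} [TopologicalSpace X] [T2Space X] [LocallyCompactSpace X]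
    (B : Fin (m + 1) → Type*) [∀ i, TopologicalSpace (B i)] [∀ i, T2Space (B i)]
    [∀ i, LocallyCompactSpace (B i)]
    (P : ∀ i, PrincipalCircleBundle (B i) X) (f : Fin m → X ≃ₜ X) :
    ∃ (p : Quot (Krel m B P f) → X)
      (act : Circle → Quot (Krel m B P f) → Quot (Krel m B P f)),
      (∀ c : ↥(Cset m B P f),
        p (Quot.mk _ c) = (P (Fin.last m)).proj (c.1 (Fin.last m))) ∧
      Continuous p ∧ Function.Surjective p ∧
      (∀ (z : Circle) (c c' : ↥(Cset m B P f)),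
        (∀ i, c'.1 i = if i = Fin.last m then (P i).smul z (c.1 i) else c.1 i) →
        act z (Quot.mk _ c) = Quot.mk _ c') ∧
      Continuous (fun q : Circle × Quot (Krel m B P f) => act q.1 q.2) ∧
      (∀ (z : Circle) (x : Quot (Krel m B P f)), p (act z x) = p x) ∧
      Topology.IsEmbedding
        (fun q : Circle × Quot (Krel m B P f) => (act q.1 q.2, q.2)) ∧
      Set.range (fun q : Circle × Quot (Krel m B P f) => (act q.1 q.2, q.2)) =
        {q : Quot (Krel m B P f) × Quot (Krel m B P f) | p q.1 = p q.2} ∧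
      (∀ c c' : ↥(Cset m B P f), (∀ i, (P i).proj (c.1 i) = (P i).proj (c'.1 i)) →
        act (∏ i, (P i).pairing (c.1 i) (c'.1 i)) (Quot.mk _ c') = Quot.mk _ c) := by
  refine ⟨pmap, actQ, fun c => rfl, ?_, pmap_surj, ?_, continuous_actQ, pmap_actQ,
    isEmbedding_phi, range_phi, actQ_pairing⟩
  · rw [isQuotientMap_quot_mk.continuous_iff]
    exact (P (Fin.last m)).continuous_proj.comp
      ((continuous_apply (Fin.last m)).comp continuous_subtype_val)
  · intro z c c' h
    rw [actQ_mk]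
    exact congrArg (Quot.mk _) (Subtype.ext (funext fun i => (h i).symm))
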